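/- Define r, r̃ : ℝ² → ℝ³ by r(x,y) = (x, y, x²) and r̃(x,y) = (2x, 2y, 4x²). Then (i) r̃ = r ∘ φ where φ(x,y) = (2x, 2y), so in particular the images of r and r̃ coincide; (ii) r(0,0) = r̃(0,0) and the unit normals of r and r̃ at the origin both equal (0,0,1); but (iii) Dr(0,0) ≠ Dr̃(0,0). -/

import Mathlib

noncomputable def unitNormal12 (f : ℝ × ℝ → Fin 3 → ℝ) (v : ℝ × ℝ) : Fin 3 → ℝ :=
  let c := crossProduct (fderiv ℝ f v (1, 0)) (fderiv ℝ f v (0, 1))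
  (Real.sqrt (∑ i, c i ^ 2))⁻¹ • c

def r12 : ℝ × ℝ → Fin 3 → ℝ := fun v => ![v.1, v.2, v.1 ^ 2]

def rt12 : ℝ × ℝ → Fin 3 → ℝ := fun v => ![2 * v.1, 2 * v.2, 4 * v.1 ^ 2]

/-! Since `rt12 = r12 ∘ (2 • ·)`, the chain rule gives `D rt12 (0) = 2 • D r12 (0)`. Scaling both
partial derivatives by `2` scales their cross product by `4 > 0`, which normalization removes, so
the unit normals agree; but `D r12 (0) ≠ 0`, so `2 • D r12 (0) ≠ D r12 (0)`. -/

theorem HasFDerivAt.vec3 {𝕜 E : Type*} [NontriviallyNormedField 𝕜] [NormedAddCommGroup E]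
    [NormedSpace 𝕜 E] {f₀ f₁ f₂ : E → 𝕜} {L₀ L₁ L₂ : E →L[𝕜] 𝕜} {x : E}
    (h₀ : HasFDerivAt f₀ L₀ x) (h₁ : HasFDerivAt f₁ L₁ x) (h₂ : HasFDerivAt f₂ L₂ x) :
    HasFDerivAt (fun v => ![f₀ v, f₁ v, f₂ v]) (ContinuousLinearMap.pi ![L₀, L₁, L₂]) x := by
  refine hasFDerivAt_pi'' fun i => ?_
  fin_cases i <;> simpa

theorem inv_sqrt_sum_sq_smul_smul_of_pos {ι : Type*} [Fintype ι] {t : ℝ} (ht : 0 < t)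
    (x : ι → ℝ) :
    (√(∑ i, (t • x) i ^ 2))⁻¹ • t • x = (√(∑ i, x i ^ 2))⁻¹ • x := by
  have hsum : ∑ i, (t • x) i ^ 2 = t ^ 2 * ∑ i, x i ^ 2 := by
    simp only [Pi.smul_apply, smul_eq_mul, mul_pow, Finset.mul_sum]
  rw [hsum, Real.sqrt_mul (sq_nonneg t), Real.sqrt_sq ht.le, smul_smul, mul_inv_rev,
    inv_mul_cancel_right₀ ht.ne']

theorem unitNormal12_comp_smul (f : ℝ × ℝ → Fin 3 → ℝ) {c : ℝ} (hc : c ≠ 0) (v : ℝ × ℝ) :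
    unitNormal12 (fun w => f (c • w)) v = unitNormal12 f (c • v) := by
  simp only [unitNormal12, fderiv_comp_smul, smul_apply, map_smul, LinearMap.smul_apply]
  rw [smul_smul c c, ← sq]
  exact inv_sqrt_sum_sq_smul_smul_of_pos (sq_pos_of_ne_zero hc) _

theorem hasFDerivAt_r12 (v : ℝ × ℝ) :
    HasFDerivAt r12 (ContinuousLinearMap.pi ![ContinuousLinearMap.fst ℝ ℝ ℝ,
      ContinuousLinearMap.snd ℝ ℝ ℝ, (2 * v.1) • ContinuousLinearMap.fst ℝ ℝ ℝ]) v := by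
  refine hasFDerivAt_fst.vec3 hasFDerivAt_snd ?_
  simpa using (hasFDerivAt_fst (𝕜 := ℝ) (p := v)).pow 2

theorem fderiv_r12_zero_ne_zero : fderiv ℝ r12 0 ≠ 0 := by
  rw [(hasFDerivAt_r12 0).fderiv]
  intro h
  simpa using congrFun (DFunLike.congr_fun h (1, 0)) 0

theorem unitNormal12_r12_zero : unitNormal12 r12 0 = ![0, 0, 1] := by
  simp [unitNormal12, (hasFDerivAt_r12 0).fderiv, cross_apply, Fin.sum_univ_three]

theorem rt12_eq_r12_comp_smul : rt12 = fun v => r12 ((2 : ℝ) • v) := by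
  funext v
  simp only [r12, rt12, Prod.smul_fst, Prod.smul_snd, smul_eq_mul, mul_pow]
  norm_num

theorem stmt12 :
    (rt12 = r12 ∘ (fun v : ℝ × ℝ => (2 * v.1, 2 * v.2)) ∧
      Set.range rt12 = Set.range r12) ∧
    (r12 0 = rt12 0 ∧
      unitNormal12 r12 0 = ![0, 0, 1] ∧ unitNormal12 rt12 0 = ![0, 0, 1]) ∧
    fderiv ℝ r12 0 ≠ fderiv ℝ rt12 0 := by
  have h2 : (2 : ℝ) ≠ 0 := two_ne_zero
  refine ⟨⟨rt12_eq_r12_comp_smul, ?_⟩, ⟨?_, unitNormal12_r12_zero, ?_⟩, ?_⟩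
  · rw [rt12_eq_r12_comp_smul]
    exact (MulAction.surjective₀ (α := ℝ × ℝ) h2).range_comp r12
  · simp [r12, rt12]
  · rw [rt12_eq_r12_comp_smul, unitNormal12_comp_smul r12 h2, smul_zero,
      unitNormal12_r12_zero]
  · rw [rt12_eq_r12_comp_smul, fderiv_comp_smul, smul_zero]
    intro h
    have h12 : (1 : ℝ) = 2 := smul_left_injective ℝ fderiv_r12_zero_ne_zero
      (show (1 : ℝ) • _ = (2 : ℝ) • _ by rwa [one_smul])
    norm_num at h12
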